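/- Let ε = δ₀/8, θ = 3ε, α = 5ε, β = 7ε, and B the Banach space of continuous h on GL_d(R)×P(R^d) with ‖h‖_B = |h|_θ + k_{ε,α}(h) + k'_{ε,β}(h) < ∞. Then for every h ∈ B and every t ∈ R, e^{itρ}h ∈ B and ‖e^{itρ}h‖_B ≤ ‖h‖_B + 4|t|^ε |h|_θ. -/

import Mathlib

open scoped LinearAlgebra.Projectivization RealInnerProductSpace ENNReal
open MeasureTheory

noncomputable section

abbrev E (d : ℕ) := EuclideanSpace ℝ (Fin d)
abbrev Gd (d : ℕ) := (E d →L[ℝ] E d)ˣ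

/-- `N(g) = max(‖g‖, ‖g⁻¹‖)`. -/
def Nnorm {d : ℕ} (g : Gd d) : ℝ :=
  max ‖(g : E d →L[ℝ] E d)‖ ‖((g⁻¹ : Gd d) : E d →L[ℝ] E d)‖

instance (d : ℕ) : TopologicalSpace (ℙ ℝ (E d)) := instTopologicalSpaceQuotient

/-- Angular distance between the directions of nonzero vectors `x, y`:
`d(x̄, ȳ) = ‖x ∧ y‖/(‖x‖‖y‖) = √(‖x‖²‖y‖² − ⟨x,y⟩²)/(‖x‖‖y‖)`. -/
def angDist {d : ℕ} (x y : E d) : ℝ :=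
  Real.sqrt (‖x‖ ^ 2 * ‖y‖ ^ 2 - ⟪x, y⟫ ^ 2) / (‖x‖ * ‖y‖)

/-- Angular distance on projective space, via representatives (it is
scale-invariant). -/
def dP {d : ℕ} (x y : ℙ ℝ (E d)) : ℝ := angDist x.rep y.rep

/-- The norm cocycle `ρ(g, v̄) = log (‖gv‖/‖v‖)`. -/
def ρ {d : ℕ} (g : Gd d) (x : ℙ ℝ (E d)) : ℝ :=
  Real.log (‖(g : E d →L[ℝ] E d) x.rep‖ / ‖x.rep‖)

/-- The weighted sup-seminorm `|h|_θ = sup_{(g,ū)} |h(g,ū)| / N(g)^θ`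
(with values in `[0,∞]`). -/
def nθ {d : ℕ} (θ : ℝ) (h : Gd d → ℙ ℝ (E d) → ℂ) : ℝ≥0∞ :=
  ⨆ (g : Gd d) (x : ℙ ℝ (E d)),
    ENNReal.ofReal (‖h g x‖ / Nnorm g ^ θ)

/-- The weighted Hölder seminorm in the projective variable:
`k_{ε,α}(h) = sup_{g, ū ≠ v̄} |h(g,ū)−h(g,v̄)| / (d(ū,v̄)^ε N(g)^α)`. -/
def kP {d : ℕ} (ε α : ℝ) (h : Gd d → ℙ ℝ (E d) → ℂ) : ℝ≥0∞ :=
  ⨆ (g : Gd d) (x : ℙ ℝ (E d)) (y : ℙ ℝ (E d)) (_ : x ≠ y),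
    ENNReal.ofReal (‖h g x - h g y‖ / (dP x y ^ ε * Nnorm g ^ α))

/-- The weighted Hölder seminorm in the matrix variable:
`k'_{ε,β}(h) = sup_{g ≠ g', ū} |h(g,ū)−h(g',ū)| / (‖g−g'‖^ε N(g)^β N(g')^β)`. -/
def kG {d : ℕ} (ε β : ℝ) (h : Gd d → ℙ ℝ (E d) → ℂ) : ℝ≥0∞ :=
  ⨆ (g : Gd d) (g' : Gd d) (_ : g ≠ g') (x : ℙ ℝ (E d)),
    ENNReal.ofReal (‖h g x - h g' x‖ /
      (‖(g : E d →L[ℝ] E d) - (g' : E d →L[ℝ] E d)‖ ^ ε * Nnorm g ^ β * Nnorm g' ^ β))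

/-- The Banach norm `‖h‖_B = |h|_θ + k_{ε,α}(h) + k'_{ε,β}(h)` (in `[0,∞]`). -/
def normB {d : ℕ} (θ ε α β : ℝ) (h : Gd d → ℙ ℝ (E d) → ℂ) : ℝ≥0∞ :=
  nθ θ h + kP ε α h + kG ε β h

/-!
Since `|e^{itρ}| = 1`, the seminorm `|·|_θ` does not change. For the two Hölder seminorms write
`e^{ia} z - e^{ib} w = e^{ia} (z - w) + (e^{ia} - e^{ib}) w` and use
`|e^{ia} - e^{ib}| = 2 |sin ((a - b) / 2)| ≤ 2 |(a - b) / 2|^ε`. The cocycle `ρ` is Lipschitz in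
each variable: with constant `2 N(g)²` for the angular distance (compare the unit vector `u`
with whichever of `±v` is closer) and constant `N(g) N(g')` for the operator norm, because
`‖gu‖ ≥ N(g)⁻¹` on unit vectors. The powers `N^{2ε}` and `N^ε N'^ε` so produced are absorbed
by the weights, since `2ε + θ ≤ α` and `ε + θ ≤ β`.
-/

lemma abs_sin_le_abs_rpow (y : ℝ) {ε : ℝ} (hε0 : 0 ≤ ε) (hε1 : ε ≤ 1) :
    |Real.sin y| ≤ |y| ^ ε := by
  rcases le_total |y| 1 with hy | hy
  · exact Real.abs_sin_le_abs.trans (Real.self_le_rpow_of_le_one (abs_nonneg y) hy hε1)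
  · exact (Real.abs_sin_le_one y).trans (Real.one_le_rpow hy hε0)

lemma norm_exp_I_mul_sub_exp_I_mul_le (a b : ℝ) {ε : ℝ} (hε0 : 0 ≤ ε) (hε1 : ε ≤ 1) :
    ‖Complex.exp (Complex.I * a) - Complex.exp (Complex.I * b)‖ ≤ 2 * (|a - b| / 2) ^ ε := by
  have hsplit : Complex.exp (Complex.I * a) - Complex.exp (Complex.I * b)
      = Complex.exp (Complex.I * b) * (Complex.exp (Complex.I * ↑(a - b)) - 1) := by
    rw [mul_sub, ← Complex.exp_add]
    push_cast
    ring_nf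
  rw [hsplit, norm_mul, Complex.norm_exp_I_mul_ofReal, one_mul,
    Complex.norm_exp_I_mul_ofReal_sub_one, Real.norm_eq_abs, abs_mul, abs_two, ← abs_two,
    ← abs_div, abs_two]
  gcongr
  exact abs_sin_le_abs_rpow _ hε0 hε1

lemma norm_exp_I_mul_mul_sub_le (a b : ℝ) (z w : ℂ) {ε : ℝ} (hε0 : 0 ≤ ε) (hε1 : ε ≤ 1) :
    ‖Complex.exp (Complex.I * a) * z - Complex.exp (Complex.I * b) * w‖
      ≤ ‖z - w‖ + 2 * (|a - b| / 2) ^ ε * ‖w‖ :=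
  calc ‖Complex.exp (Complex.I * a) * z - Complex.exp (Complex.I * b) * w‖
      = ‖Complex.exp (Complex.I * a) * (z - w)
          + (Complex.exp (Complex.I * a) - Complex.exp (Complex.I * b)) * w‖ := by
        congr 1; ring
    _ ≤ ‖z - w‖ + ‖Complex.exp (Complex.I * a) - Complex.exp (Complex.I * b)‖ * ‖w‖ := by
        refine (norm_add_le _ _).trans_eq ?_
        rw [norm_mul, norm_mul, Complex.norm_exp_I_mul_ofReal, one_mul]
    _ ≤ ‖z - w‖ + 2 * (|a - b| / 2) ^ ε * ‖w‖ := by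
        gcongr
        exact norm_exp_I_mul_sub_exp_I_mul_le a b hε0 hε1

lemma abs_log_sub_log_le {p q K : ℝ} (hK : 0 ≤ K) (hKp : 1 ≤ K * p) (hKq : 1 ≤ K * q) :
    |Real.log p - Real.log q| ≤ K * |p - q| := by
  wlog hqp : q ≤ p generalizing p q
  · rw [abs_sub_comm, abs_sub_comm p]
    exact this hKq hKp (le_of_not_ge hqp)
  have hq : 0 < q := pos_of_mul_pos_right (one_pos.trans_le hKq) hK
  have hp : 0 < p := hq.trans_le hqp
  rw [abs_of_nonneg (sub_nonneg.2 (Real.log_le_log hq hqp)), abs_of_nonneg (sub_nonneg.2 hqp),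
    ← Real.log_div hp.ne' hq.ne']
  calc Real.log (p / q) ≤ p / q - 1 := Real.log_le_sub_one_of_pos (div_pos hp hq)
    _ = (p - q) / q := by field_simp
    _ ≤ K * (p - q) := by
        rw [div_le_iff₀ hq]
        nlinarith [mul_le_mul_of_nonneg_left hKq (sub_nonneg.2 hqp)]

lemma norm_le_norm_inv_mul_norm_apply {𝕜 F : Type*} [NontriviallyNormedField 𝕜]
    [NormedAddCommGroup F] [NormedSpace 𝕜 F] (g : (F →L[𝕜] F)ˣ) (u : F) :
    ‖u‖ ≤ ‖((g⁻¹ : (F →L[𝕜] F)ˣ) : F →L[𝕜] F)‖ * ‖(g : F →L[𝕜] F) u‖ :=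
  calc ‖u‖ = ‖((g⁻¹ : (F →L[𝕜] F)ˣ) : F →L[𝕜] F) ((g : F →L[𝕜] F) u)‖ := by
        change ‖u‖ = ‖(((g⁻¹ : (F →L[𝕜] F)ˣ) : F →L[𝕜] F) * g) u‖
        rw [Units.inv_mul]
        rfl
    _ ≤ _ := ContinuousLinearMap.le_opNorm _ _

section Cocycle

variable {d : ℕ}

lemma Nnorm_nonneg (g : Gd d) : 0 ≤ Nnorm g :=
  (norm_nonneg _).trans (le_max_left _ _)

lemma one_le_Nnorm_mul_norm_apply (g : Gd d) {u : E d} (hu : ‖u‖ = 1) :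
    1 ≤ Nnorm g * ‖(g : E d →L[ℝ] E d) u‖ :=
  calc (1 : ℝ) = ‖u‖ := hu.symm
    _ ≤ _ := norm_le_norm_inv_mul_norm_apply g u
    _ ≤ _ := by gcongr; exact le_max_right _ _

lemma one_le_Nnorm [Nontrivial (E d)] (g : Gd d) : 1 ≤ Nnorm g := by
  obtain ⟨u, hu⟩ := exists_norm_eq (E d) zero_le_one
  have hgu : ‖(g : E d →L[ℝ] E d) u‖ ≤ Nnorm g :=
    calc ‖(g : E d →L[ℝ] E d) u‖ ≤ ‖(g : E d →L[ℝ] E d)‖ := by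
          simpa [hu] using (g : E d →L[ℝ] E d).le_opNorm u
      _ ≤ Nnorm g := le_max_left _ _
  nlinarith [one_le_Nnorm_mul_norm_apply g hu, Nnorm_nonneg g]

lemma angDist_nonneg (u v : E d) : 0 ≤ angDist u v := by
  unfold angDist; positivity

lemma angDist_smul_smul {c c' : ℝ} (hc : 0 < c) (hc' : 0 < c') (u v : E d) :
    angDist (c • u) (c' • v) = angDist u v := by
  unfold angDist
  rw [norm_smul, norm_smul, Real.norm_eq_abs, Real.norm_eq_abs, abs_of_pos hc, abs_of_pos hc',
    real_inner_smul_left, real_inner_smul_right,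
    show (c * ‖u‖) ^ 2 * (c' * ‖v‖) ^ 2 - (c * (c' * ⟪u, v⟫)) ^ 2
      = (c * c') ^ 2 * (‖u‖ ^ 2 * ‖v‖ ^ 2 - ⟪u, v⟫ ^ 2) by ring,
    Real.sqrt_mul (sq_nonneg _), Real.sqrt_sq (by positivity),
    show c * ‖u‖ * (c' * ‖v‖) = c * c' * (‖u‖ * ‖v‖) by ring]
  exact mul_div_mul_left _ _ (by positivity)

lemma exists_abs_eq_one_norm_sub_smul_le_angDist {u v : E d} (hu : ‖u‖ = 1) (hv : ‖v‖ = 1) :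
    ∃ s : ℝ, |s| = 1 ∧ ‖u - s • v‖ ≤ 2 * angDist u v := by
  set c := ⟪u, v⟫ with hc
  have hc1 : |c| ≤ 1 := by simpa [hu, hv] using abs_real_inner_le_norm u v
  have hc2 : c ^ 2 ≤ 1 := by
    rw [← sq_abs]
    exact pow_le_one₀ (abs_nonneg c) hc1
  have hang : (2 * angDist u v) ^ 2 = 4 * (1 - c ^ 2) := by
    rw [angDist, hu, hv, ← hc, mul_pow, div_pow, Real.sq_sqrt (by linarith)]
    ring
  have key : ∀ s : ℝ, |s| = 1 → s * c = |c| → ‖u - s • v‖ ≤ 2 * angDist u v := by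
    intro s hs hsc
    have hsv : ‖u - s • v‖ ^ 2 = 2 - 2 * |c| := by
      rw [norm_sub_sq_real, norm_smul, real_inner_smul_right, Real.norm_eq_abs, hs, hu, hv, hsc]
      ring
    refine (pow_le_pow_iff_left₀ (norm_nonneg _)
      (mul_nonneg zero_le_two (angDist_nonneg u v)) two_ne_zero).1 ?_
    rw [hsv, hang]
    nlinarith [sq_abs c, abs_nonneg c]
  rcases le_total 0 c with h0 | h0
  · exact ⟨1, abs_one, key 1 abs_one (by rw [one_mul, abs_of_nonneg h0])⟩
  · exact ⟨-1, by simp, key (-1) (by simp) (by rw [abs_of_nonpos h0]; ring)⟩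

def unitRep (x : ℙ ℝ (E d)) : E d := ‖x.rep‖⁻¹ • x.rep

lemma norm_unitRep (x : ℙ ℝ (E d)) : ‖unitRep x‖ = 1 :=
  norm_smul_inv_norm x.rep_nonzero

lemma ρ_eq_log_norm_unitRep (g : Gd d) (x : ℙ ℝ (E d)) :
    ρ g x = Real.log ‖(g : E d →L[ℝ] E d) (unitRep x)‖ := by
  rw [ρ, unitRep, map_smul, norm_smul, Real.norm_eq_abs, abs_inv, abs_norm, div_eq_inv_mul]

lemma dP_eq_angDist_unitRep (x y : ℙ ℝ (E d)) : dP x y = angDist (unitRep x) (unitRep y) :=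
  (angDist_smul_smul (inv_pos.2 (norm_pos_iff.2 x.rep_nonzero))
    (inv_pos.2 (norm_pos_iff.2 y.rep_nonzero)) _ _).symm

lemma abs_ρ_sub_ρ_le_dP (g : Gd d) (x y : ℙ ℝ (E d)) :
    |ρ g x - ρ g y| ≤ 2 * (Nnorm g * Nnorm g) * dP x y := by
  obtain ⟨s, hs, hsub⟩ :=
    exists_abs_eq_one_norm_sub_smul_le_angDist (norm_unitRep x) (norm_unitRep y)
  set G : E d →L[ℝ] E d := ↑g
  set u := unitRep x
  set v := s • unitRep y
  have hv : ‖v‖ = 1 := by rw [norm_smul, Real.norm_eq_abs, hs, one_mul, norm_unitRep]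
  have hGv : ‖G v‖ = ‖G (unitRep y)‖ := by rw [map_smul, norm_smul, Real.norm_eq_abs, hs, one_mul]
  rw [ρ_eq_log_norm_unitRep, ρ_eq_log_norm_unitRep, ← hGv, dP_eq_angDist_unitRep]
  calc |Real.log ‖G u‖ - Real.log ‖G v‖| ≤ Nnorm g * |‖G u‖ - ‖G v‖| :=
        abs_log_sub_log_le (Nnorm_nonneg g) (one_le_Nnorm_mul_norm_apply g (norm_unitRep x))
          (one_le_Nnorm_mul_norm_apply g hv)
    _ ≤ Nnorm g * (Nnorm g * (2 * angDist u (unitRep y))) := by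
        refine mul_le_mul_of_nonneg_left ?_ (Nnorm_nonneg g)
        calc |‖G u‖ - ‖G v‖| ≤ ‖G (u - v)‖ := by rw [map_sub]; exact abs_norm_sub_norm_le _ _
          _ ≤ ‖G‖ * ‖u - v‖ := G.le_opNorm _
          _ ≤ Nnorm g * (2 * angDist u (unitRep y)) :=
            mul_le_mul (le_max_left _ _) hsub (norm_nonneg _) (Nnorm_nonneg g)
    _ = 2 * (Nnorm g * Nnorm g) * angDist u (unitRep y) := by ring

lemma abs_ρ_sub_ρ_le_norm_sub (g g' : Gd d) (x : ℙ ℝ (E d)) :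
    |ρ g x - ρ g' x| ≤
      ‖(g : E d →L[ℝ] E d) - (g' : E d →L[ℝ] E d)‖ * (Nnorm g * Nnorm g') := by
  have : Nontrivial (E d) := nontrivial_of_ne _ _ x.rep_nonzero
  set u := unitRep x
  have hgu := one_le_Nnorm_mul_norm_apply g (norm_unitRep x)
  have hg'u := one_le_Nnorm_mul_norm_apply g' (norm_unitRep x)
  have hN := Nnorm_nonneg g
  have hN' := Nnorm_nonneg g'
  rw [ρ_eq_log_norm_unitRep, ρ_eq_log_norm_unitRep]
  calc |Real.log ‖(g : E d →L[ℝ] E d) u‖ - Real.log ‖(g' : E d →L[ℝ] E d) u‖|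
      ≤ Nnorm g * Nnorm g' * |‖(g : E d →L[ℝ] E d) u‖ - ‖(g' : E d →L[ℝ] E d) u‖| := by
        refine abs_log_sub_log_le (mul_nonneg hN hN') ?_ ?_
        · nlinarith [one_le_Nnorm g']
        · nlinarith [one_le_Nnorm g]
    _ ≤ Nnorm g * Nnorm g' * ‖((g : E d →L[ℝ] E d) - (g' : E d →L[ℝ] E d)) u‖ := by
        gcongr
        rw [sub_apply]
        exact abs_norm_sub_norm_le _ _
    _ ≤ Nnorm g * Nnorm g' * ‖(g : E d →L[ℝ] E d) - (g' : E d →L[ℝ] E d)‖ := by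
        gcongr
        simpa [u, norm_unitRep] using ((g : E d →L[ℝ] E d) - g').le_opNorm u
    _ = _ := mul_comm _ _

end Cocycle

section Twist

variable {d : ℕ}

def twist (t : ℝ) (h : Gd d → ℙ ℝ (E d) → ℂ) : Gd d → ℙ ℝ (E d) → ℂ :=
  fun g x => Complex.exp (Complex.I * (t * ρ g x)) * h g x

lemma norm_twist (t : ℝ) (h : Gd d → ℙ ℝ (E d) → ℂ) (g : Gd d) (x : ℙ ℝ (E d)) :
    ‖twist t h g x‖ = ‖h g x‖ := by
  rw [twist, norm_mul, ← Complex.ofReal_mul, Complex.norm_exp_I_mul_ofReal, one_mul]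

lemma norm_twist_sub_twist_le (t : ℝ) (h : Gd d → ℙ ℝ (E d) → ℂ) {ε : ℝ} (hε0 : 0 ≤ ε)
    (hε1 : ε ≤ 1) (g g' : Gd d) (x y : ℙ ℝ (E d)) :
    ‖twist t h g x - twist t h g' y‖
      ≤ ‖h g x - h g' y‖ + 2 * (|t| * |ρ g x - ρ g' y| / 2) ^ ε * ‖h g' y‖ := by
  have := norm_exp_I_mul_mul_sub_le (t * ρ g x) (t * ρ g' y) (h g x) (h g' y) hε0 hε1
  rwa [← mul_sub, abs_mul, Complex.ofReal_mul, Complex.ofReal_mul] at this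

lemma norm_twist_sub_twist_le_dP (t : ℝ) (h : Gd d → ℙ ℝ (E d) → ℂ) {ε θ α : ℝ}
    (hε0 : 0 ≤ ε) (hε1 : ε ≤ 1) (hα : 2 * ε + θ ≤ α) (g : Gd d) (x y : ℙ ℝ (E d)) :
    ‖twist t h g x - twist t h g y‖ ≤ ‖h g x - h g y‖
      + 2 * |t| ^ ε * (dP x y ^ ε * Nnorm g ^ α) * (‖h g y‖ / Nnorm g ^ θ) := by
  have : Nontrivial (E d) := nontrivial_of_ne _ _ x.rep_nonzero
  set N := Nnorm g
  have hN : 0 < N := one_pos.trans_le (one_le_Nnorm g)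
  have hdP : 0 ≤ dP x y := angDist_nonneg _ _
  have hweight : (N * N) ^ ε ≤ N ^ α / N ^ θ := by
    rw [le_div_iff₀ (by positivity), Real.mul_rpow hN.le hN.le, ← Real.rpow_add hN,
      ← Real.rpow_add hN]
    exact Real.rpow_le_rpow_of_exponent_le (one_le_Nnorm g) (by linarith)
  calc ‖twist t h g x - twist t h g y‖
      ≤ ‖h g x - h g y‖ + 2 * (|t| * |ρ g x - ρ g y| / 2) ^ ε * ‖h g y‖ :=
        norm_twist_sub_twist_le t h hε0 hε1 g g x y
    _ ≤ ‖h g x - h g y‖ + 2 * (|t| * ((N * N) * dP x y)) ^ ε * ‖h g y‖ := by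
        gcongr
        have := abs_ρ_sub_ρ_le_dP g x y
        nlinarith [abs_nonneg t, abs_nonneg (ρ g x - ρ g y)]
    _ = ‖h g x - h g y‖ + 2 * |t| ^ ε * dP x y ^ ε * ‖h g y‖ * (N * N) ^ ε := by
        rw [Real.mul_rpow (abs_nonneg t) (by positivity), Real.mul_rpow (by positivity) hdP]
        ring
    _ ≤ ‖h g x - h g y‖ + 2 * |t| ^ ε * dP x y ^ ε * ‖h g y‖ * (N ^ α / N ^ θ) := by
        gcongr
    _ = _ := by ring

lemma norm_twist_sub_twist_le_norm_sub (t : ℝ) (h : Gd d → ℙ ℝ (E d) → ℂ) {ε θ β : ℝ}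
    (hε0 : 0 ≤ ε) (hε1 : ε ≤ 1) (hθ : 0 ≤ θ) (hβ : ε + θ ≤ β) (g g' : Gd d)
    (x : ℙ ℝ (E d)) :
    ‖twist t h g x - twist t h g' x‖ ≤ ‖h g x - h g' x‖
      + 2 * |t| ^ ε * (‖(g : E d →L[ℝ] E d) - (g' : E d →L[ℝ] E d)‖ ^ ε
        * Nnorm g ^ β * Nnorm g' ^ β) * (‖h g' x‖ / Nnorm g' ^ θ) := by
  have : Nontrivial (E d) := nontrivial_of_ne _ _ x.rep_nonzero
  set N := Nnorm g
  set N' := Nnorm g'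
  set M := ‖(g : E d →L[ℝ] E d) - (g' : E d →L[ℝ] E d)‖
  have hN : 0 < N := one_pos.trans_le (one_le_Nnorm g)
  have hN' : 0 < N' := one_pos.trans_le (one_le_Nnorm g')
  have hweight : (N * N') ^ ε ≤ N ^ β * N' ^ β / N' ^ θ := by
    rw [le_div_iff₀ (by positivity), Real.mul_rpow hN.le hN'.le, mul_assoc,
      ← Real.rpow_add hN']
    exact mul_le_mul (Real.rpow_le_rpow_of_exponent_le (one_le_Nnorm g) (by linarith))
      (Real.rpow_le_rpow_of_exponent_le (one_le_Nnorm g') hβ) (by positivity) (by positivity)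
  calc ‖twist t h g x - twist t h g' x‖
      ≤ ‖h g x - h g' x‖ + 2 * (|t| * |ρ g x - ρ g' x| / 2) ^ ε * ‖h g' x‖ :=
        norm_twist_sub_twist_le t h hε0 hε1 g g' x x
    _ ≤ ‖h g x - h g' x‖ + 2 * (|t| * (M * (N * N'))) ^ ε * ‖h g' x‖ := by
        gcongr
        have := abs_ρ_sub_ρ_le_norm_sub g g' x
        nlinarith [abs_nonneg t, abs_nonneg (ρ g x - ρ g' x)]
    _ = ‖h g x - h g' x‖ + 2 * |t| ^ ε * M ^ ε * ‖h g' x‖ * (N * N') ^ ε := by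
        rw [Real.mul_rpow (abs_nonneg t) (by positivity), Real.mul_rpow (norm_nonneg _)
          (by positivity)]
        ring
    _ ≤ ‖h g x - h g' x‖ + 2 * |t| ^ ε * M ^ ε * ‖h g' x‖ * (N ^ β * N' ^ β / N' ^ θ) := by
        gcongr
    _ = _ := by ring

end Twist

lemma ofReal_div_le_ofReal_div_add_mul {X A B c D : ℝ} (hc : 0 ≤ c) (hD : 0 ≤ D)
    (hX : X ≤ A + c * D * B) :
    ENNReal.ofReal (X / D) ≤ ENNReal.ofReal (A / D) + ENNReal.ofReal c * ENNReal.ofReal B := by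
  rcases hD.eq_or_lt with rfl | hD
  · simp
  rw [← ENNReal.ofReal_mul hc]
  refine (ENNReal.ofReal_le_ofReal ?_).trans ENNReal.ofReal_add_le
  rw [div_le_iff₀ hD, add_mul, div_mul_cancel₀ _ hD.ne']
  linarith

section Seminorms

variable {d : ℕ}

lemma ofReal_le_nθ (θ : ℝ) (h : Gd d → ℙ ℝ (E d) → ℂ) (g : Gd d) (x : ℙ ℝ (E d)) :
    ENNReal.ofReal (‖h g x‖ / Nnorm g ^ θ) ≤ nθ θ h :=
  le_iSup₂_of_le g x le_rfl

lemma ofReal_le_kP (ε α : ℝ) (h : Gd d → ℙ ℝ (E d) → ℂ) (g : Gd d) {x y : ℙ ℝ (E d)}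
    (hxy : x ≠ y) :
    ENNReal.ofReal (‖h g x - h g y‖ / (dP x y ^ ε * Nnorm g ^ α)) ≤ kP ε α h :=
  le_iSup₂_of_le g x <| le_iSup₂_of_le y hxy le_rfl

lemma ofReal_le_kG (ε β : ℝ) (h : Gd d → ℙ ℝ (E d) → ℂ) {g g' : Gd d} (hgg' : g ≠ g')
    (x : ℙ ℝ (E d)) :
    ENNReal.ofReal (‖h g x - h g' x‖ /
      (‖(g : E d →L[ℝ] E d) - (g' : E d →L[ℝ] E d)‖ ^ ε * Nnorm g ^ β * Nnorm g' ^ β))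
      ≤ kG ε β h :=
  le_iSup₂_of_le g g' <| le_iSup₂_of_le hgg' x le_rfl

lemma nθ_twist (θ t : ℝ) (h : Gd d → ℙ ℝ (E d) → ℂ) : nθ θ (twist t h) = nθ θ h := by
  simp only [nθ, norm_twist]

lemma kP_twist_le (t : ℝ) (h : Gd d → ℙ ℝ (E d) → ℂ) {ε θ α : ℝ} (hε0 : 0 ≤ ε) (hε1 : ε ≤ 1)
    (hα : 2 * ε + θ ≤ α) :
    kP ε α (twist t h) ≤ kP ε α h + ENNReal.ofReal (2 * |t| ^ ε) * nθ θ h := by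
  refine iSup₂_le fun g x => iSup₂_le fun y hxy => ?_
  calc _ ≤ _ := ofReal_div_le_ofReal_div_add_mul (by positivity)
        (mul_nonneg (Real.rpow_nonneg (angDist_nonneg _ _) _)
          (Real.rpow_nonneg (Nnorm_nonneg g) _))
        (norm_twist_sub_twist_le_dP t h hε0 hε1 hα g x y)
    _ ≤ _ := by
        gcongr
        · exact ofReal_le_kP ε α h g hxy
        · exact ofReal_le_nθ θ h g y

lemma kG_twist_le (t : ℝ) (h : Gd d → ℙ ℝ (E d) → ℂ) {ε θ β : ℝ} (hε0 : 0 ≤ ε) (hε1 : ε ≤ 1)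
    (hθ : 0 ≤ θ) (hβ : ε + θ ≤ β) :
    kG ε β (twist t h) ≤ kG ε β h + ENNReal.ofReal (2 * |t| ^ ε) * nθ θ h := by
  refine iSup₂_le fun g g' => iSup₂_le fun hgg' x => ?_
  calc _ ≤ _ := ofReal_div_le_ofReal_div_add_mul (by positivity)
        (mul_nonneg (mul_nonneg (Real.rpow_nonneg (norm_nonneg _) _)
          (Real.rpow_nonneg (Nnorm_nonneg g) _)) (Real.rpow_nonneg (Nnorm_nonneg g') _))
        (norm_twist_sub_twist_le_norm_sub t h hε0 hε1 hθ hβ g g' x)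
    _ ≤ _ := by
        gcongr
        · exact ofReal_le_kG ε β h hgg' x
        · exact ofReal_le_nθ θ h g' x

end Seminorms

theorem normB_exp_smul_le_general
    {d : ℕ} (δ₀ ε θ α β : ℝ) (hδ₀ : 0 < δ₀) (hδ₀' : δ₀ ≤ 8 / 3)
    (hε : ε = δ₀ / 8) (hθ : θ = 3 * ε) (hα : α = 5 * ε) (hβ : β = 7 * ε)
    (h : Gd d → ℙ ℝ (E d) → ℂ)
    (hfin : normB θ ε α β h ≠ ⊤) (t : ℝ) :
    normB θ ε α β (fun g x => Complex.exp (Complex.I * (t * ρ g x)) * h g x) ≠ ⊤ ∧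
    normB θ ε α β (fun g x => Complex.exp (Complex.I * (t * ρ g x)) * h g x)
      ≤ normB θ ε α β h + ENNReal.ofReal (4 * |t| ^ ε) * nθ θ h := by
  have hε0 : 0 ≤ ε := by linarith
  have hε1 : ε ≤ 1 := by linarith
  set c := ENNReal.ofReal (2 * |t| ^ ε)
  have hc : ENNReal.ofReal (4 * |t| ^ ε) = c + c := by
    rw [← ENNReal.ofReal_add (by positivity) (by positivity)]
    ring_nf
  have hle : normB θ ε α β (twist t h)
      ≤ normB θ ε α β h + ENNReal.ofReal (4 * |t| ^ ε) * nθ θ h :=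
    calc normB θ ε α β (twist t h)
        = nθ θ h + kP ε α (twist t h) + kG ε β (twist t h) := by rw [normB, nθ_twist]
      _ ≤ nθ θ h + (kP ε α h + c * nθ θ h) + (kG ε β h + c * nθ θ h) := by
          gcongr
          · exact kP_twist_le t h hε0 hε1 (by linarith)
          · exact kG_twist_le t h hε0 hε1 (by linarith) (by linarith)
      _ = normB θ ε α β h + ENNReal.ofReal (4 * |t| ^ ε) * nθ θ h := by
          rw [normB, hc]
          ring
  have hnθ : nθ θ h ≠ ⊤ := ne_top_of_le_ne_top hfin (le_self_add.trans le_self_add)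
  exact ⟨ne_top_of_le_ne_top (by finiteness) hle, hle⟩

/-- With `ε = δ₀/8`, `θ = 3ε`, `α = 5ε`, `β = 7ε` (as in the paper we may assume
`δ₀ ≤ 8/3` without loss of generality), for every `h` in the Banach space `B`
(continuous with `‖h‖_B < ∞`) and every `t ∈ ℝ`, the function `e^{itρ} h` belongs to `B`
and `‖e^{itρ} h‖_B ≤ ‖h‖_B + 4|t|^ε |h|_θ`. -/
theorem normB_exp_smul_le
    {d : ℕ} (δ₀ ε θ α β : ℝ) (hδ₀ : 0 < δ₀) (hδ₀' : δ₀ ≤ 8 / 3)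
    (hε : ε = δ₀ / 8) (hθ : θ = 3 * ε) (hα : α = 5 * ε) (hβ : β = 7 * ε)
    (h : Gd d → ℙ ℝ (E d) → ℂ)
    (hcont : Continuous fun p : Gd d × ℙ ℝ (E d) => h p.1 p.2)
    (hfin : normB θ ε α β h ≠ ⊤) (t : ℝ) :
    normB θ ε α β (fun g x => Complex.exp (Complex.I * (t * ρ g x)) * h g x) ≠ ⊤ ∧
    normB θ ε α β (fun g x => Complex.exp (Complex.I * (t * ρ g x)) * h g x)
      ≤ normB θ ε α β h + ENNReal.ofReal (4 * |t| ^ ε) * nθ θ h :=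
  normB_exp_smul_le_general δ₀ ε θ α β hδ₀ hδ₀' hε hθ hα hβ h hfin t
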